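/- Let Σ = {a, ā, b, b̄} with the indicated involution, k ≥ 1, and L ⊆ {b, b̄}*. Then the one-sided hairpin completion satisfies H_k(a*·L·ā^k, ∅) = { aⁱ w āʲ : i ≥ j ≥ k, w ∈ L }. -/

import Mathlib

inductive Letter : Type
  | a | abar | b | bbar
deriving DecidableEq

def lbar : Letter → Letter
  | .a => .abar
  | .abar => .a
  | .b => .bbar
  | .bbar => .b

def barw {α : Type} (bar : α → α) (w : List α) : List α := (w.map bar).reverse

def hairpin {α : Type} (bar : α → α) (k : ℕ) (L₁ L₂ : Language α) : Language α :=
  { w | ∃ γ a β : List α, w = γ ++ a ++ β ++ barw bar a ++ barw bar γ ∧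
      a.length = k ∧
      (γ ++ a ++ β ++ barw bar a ∈ L₁ ∨ a ++ β ++ barw bar a ++ barw bar γ ∈ L₂) }

/-!
Since `|α| = k`, the suffix `bar α` of a word `aⁱ u āᵏ` of `L₁` must be `āᵏ`, so `α = aᵏ`. The
remaining prefix `γ aᵏ β` equals `aⁱ u`; as `u` contains no `a` and `k ≥ 1`, the block `aᵏ` and
everything before it lie inside `aⁱ`, so `γ = aᵐ` with `m + k ≤ i`, and the completed word is
`aⁱ u ā^(k+m)`. Conversely `aⁱ u āʲ` arises from `γ = a^(j-k)`, `α = aᵏ`, `β = a^(i-j) u`.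
-/

theorem lbar_involutive : Function.Involutive lbar := by
  intro c; cases c <;> rfl

section Barw

variable {α : Type} {bar : α → α}

theorem length_barw (w : List α) : (barw bar w).length = w.length := by
  simp [barw]

theorem barw_replicate (n : ℕ) (c : α) :
    barw bar (List.replicate n c) = List.replicate n (bar c) := by
  simp [barw]

theorem barw_involutive (h : Function.Involutive bar) : Function.Involutive (barw bar) := by
  intro w
  simp [barw, List.map_reverse, List.map_map, h.comp_self]

theorem eq_replicate_of_append_barw_eq (h : Function.Involutive bar)
    {p q x : List α} {c : α} {k : ℕ} (hx : x.length = k)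
    (hpq : p ++ barw bar x = q ++ List.replicate k (bar c)) :
    p = q ∧ x = List.replicate k c := by
  obtain ⟨rfl, hbar⟩ := List.append_inj' hpq (by simp [length_barw, hx])
  refine ⟨rfl, ?_⟩
  rw [← barw_involutive h x, hbar, barw_replicate, h c]

end Barw

theorem exists_replicate_eq_of_append_replicate_append_eq {α : Type} {c : α} {x y u : List α}
    {i k : ℕ} (hk : 1 ≤ k) (hu : c ∉ u)
    (h : x ++ List.replicate k c ++ y = List.replicate i c ++ u) :
    ∃ z, List.replicate i c = x ++ List.replicate k c ++ z ∧ y = z ++ u := by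
  rcases List.append_eq_append_iff.mp h with h | ⟨z, hz, rfl⟩
  · exact h
  -- otherwise the overhang `z` of `x ++ c^k` into `u` is empty or ends in `c`
  · rcases z.eq_nil_or_concat with rfl | ⟨z', d, rfl⟩
    · exact ⟨[], by simpa using hz.symm, rfl⟩
    · have hlast := congrArg List.getLast? hz
      simp [List.getLast?_replicate, show k ≠ 0 by omega] at hlast
      simp [← hlast] at hu

theorem hairpin_subset {k : ℕ} (hk : 1 ≤ k) (L : Language Letter)
    (hL : ∀ w ∈ L, ∀ c ∈ w, c = Letter.b ∨ c = Letter.bbar) :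
    hairpin lbar k
      { w | ∃ i : ℕ, ∃ u ∈ L,
          w = List.replicate i Letter.a ++ u ++ List.replicate k Letter.abar }
      (0 : Language Letter) ≤
    { w | ∃ i j : ℕ, ∃ u ∈ L, k ≤ j ∧ j ≤ i ∧
        w = List.replicate i Letter.a ++ u ++ List.replicate j Letter.abar } := by
  rintro w ⟨γ, α, β, rfl, hα, ⟨i, u, hu, he⟩ | hmem⟩
  swap
  · exact absurd hmem (Language.notMem_zero _)
  obtain ⟨hprefix, rfl⟩ :=
    eq_replicate_of_append_barw_eq (c := Letter.a) lbar_involutive hα he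
  have hau : Letter.a ∉ u := fun ha => by simpa using hL u hu _ ha
  obtain ⟨z, hz, rfl⟩ := exists_replicate_eq_of_append_replicate_append_eq hk hau hprefix
  have hγ : γ = List.replicate γ.length Letter.a :=
    List.eq_replicate_iff.mpr
      ⟨rfl, fun c hc => List.eq_of_mem_replicate (n := i) (by simp [hz, hc])⟩
  have hlen := congrArg List.length hz
  simp only [List.length_append, List.length_replicate] at hlen
  refine ⟨i, k + γ.length, u, hu, by omega, by omega, ?_⟩
  rw [barw_replicate, hγ, barw_replicate, List.replicate_add, hz, ← hγ]
  simp only [lbar, List.append_assoc]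

theorem subset_hairpin {k : ℕ} (L : Language Letter) :
    { w | ∃ i j : ℕ, ∃ u ∈ L, k ≤ j ∧ j ≤ i ∧
        w = List.replicate i Letter.a ++ u ++ List.replicate j Letter.abar } ≤
    hairpin lbar k
      { w | ∃ i : ℕ, ∃ u ∈ L,
          w = List.replicate i Letter.a ++ u ++ List.replicate k Letter.abar }
      (0 : Language Letter) := by
  rintro w ⟨i, j, u, hu, hkj, hji, rfl⟩
  have hi : List.replicate i Letter.a = List.replicate (j - k) Letter.a
      ++ List.replicate k Letter.a ++ List.replicate (i - j) Letter.a := by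
    rw [← List.replicate_add, ← List.replicate_add]; congr 1; omega
  have hj : List.replicate j Letter.abar =
      List.replicate k Letter.abar ++ List.replicate (j - k) Letter.abar := by
    rw [← List.replicate_add]; congr 1; omega
  refine ⟨List.replicate (j - k) Letter.a, List.replicate k Letter.a,
    List.replicate (i - j) Letter.a ++ u, ?_, by simp, Or.inl ⟨i, u, hu, ?_⟩⟩
  · rw [hi, hj, barw_replicate, barw_replicate]
    simp only [lbar, List.append_assoc]
  · rw [hi, barw_replicate]
    simp only [lbar, List.append_assoc]

theorem hairpin_hardness_language {k : ℕ} (hk : 1 ≤ k) (L : Language Letter)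
    (hL : ∀ w ∈ L, ∀ c ∈ w, c = Letter.b ∨ c = Letter.bbar) :
    hairpin lbar k
      { w | ∃ i : ℕ, ∃ u ∈ L,
          w = List.replicate i Letter.a ++ u ++ List.replicate k Letter.abar }
      (0 : Language Letter) =
    { w | ∃ i j : ℕ, ∃ u ∈ L, k ≤ j ∧ j ≤ i ∧
        w = List.replicate i Letter.a ++ u ++ List.replicate j Letter.abar } :=
  le_antisymm (hairpin_subset hk L hL) (subset_hairpin L)
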